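/- Let n ≥ 2 and let m ∈ {0,1,…,n−1} with gcd(n, m) = 1. Suppose F(x) = circ(f_0(x),…,f_{n−1}(x)) is a circulant matrix function such that sup_{x ∈ ℂ} ‖F(x)‖ = ∞ and there is an ε > 0 with ‖F(x + ω^m y) − Ω^{−m} F(y) Ω^{m} F(x)‖ < ε for all x, y ∈ ℂ. Then F(x + ω^m y) = Ω^{−m} F(y) Ω^{m} F(x) for all x, y ∈ ℂ. -/

import Mathlib

open scoped Matrix
open Fin.NatCast Fin.IntCast Fin.CommRing

lemma mul_le_of_unbdd {r K : ℝ} (hr : 0 ≤ r) {p : ℂ → ℝ}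
    (hp : ∀ C, ∃ x, C < p x) (hb : ∀ x, r * p x ≤ K) : r = 0 := by
  by_contra h
  have hr' : 0 < r := lt_of_le_of_ne hr (Ne.symm h)
  obtain ⟨x, hx⟩ := hp (K / r)
  have h1 : K < r * p x := by
    rw [div_lt_iff₀ hr'] at hx; linarith [hx]
  linarith [hb x]

lemma unbdd_step {g h : ℂ → ℂ} {c : ℂ} (hc : c ≠ 0) {ε : ℝ}
    (H : ∀ x y, ‖g (x + c * y) - h y * g x‖ ≤ ε)
    (hg : ∀ C, ∃ x, C < ‖g x‖) :
    ∀ C, ∃ y, C < ‖h y‖ := by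
  intro C
  obtain ⟨x₀, hx₀⟩ := hg 0
  obtain ⟨u, hu⟩ := hg (|C| * ‖g x₀‖ + ε)
  refine ⟨(u - x₀) / c, ?_⟩
  have hxy : x₀ + c * ((u - x₀) / c) = u := by field_simp; ring
  have h1 := H x₀ ((u - x₀) / c)
  rw [hxy] at h1
  have h2 : ‖g u‖ ≤ ‖g u - h ((u - x₀) / c) * g x₀‖
      + ‖h ((u - x₀) / c)‖ * ‖g x₀‖ := by
    have := norm_add_le (g u - h ((u - x₀) / c) * g x₀) (h ((u - x₀) / c) * g x₀)
    rw [sub_add_cancel, norm_mul] at this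
    exact this
  have h3 : |C| * ‖g x₀‖ < ‖h ((u - x₀) / c)‖ * ‖g x₀‖ := by
    nlinarith [h1, h2, hu]
  exact lt_of_le_of_lt (le_abs_self C) ((mul_lt_mul_iff_of_pos_right hx₀).mp h3)

lemma exp_of_superstable {g h : ℂ → ℂ} {c : ℂ} {ε : ℝ}
    (H : ∀ x y, ‖g (x + c * y) - h y * g x‖ ≤ ε)
    (hg : ∀ C, ∃ x, C < ‖g x‖) :
    ∀ y z, h (y + z) = h y * h z := by
  intro y z
  have hbnd : ∀ x, ‖h (y + z) - h y * h z‖ * ‖g x‖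
      ≤ (2 + ‖h y‖) * ε := by
    intro x
    have e1 := H x (y + z)
    have harg : x + c * (y + z) = x + c * z + c * y := by ring
    rw [harg] at e1
    have e2 := H (x + c * z) y
    have e3 := H x z
    have key : (h (y + z) - h y * h z) * g x =
        -(g (x + c * z + c * y) - h (y + z) * g x)
        + (g (x + c * z + c * y) - h y * g (x + c * z))
        + h y * (g (x + c * z) - h z * g x) := by ring
    calc ‖h (y + z) - h y * h z‖ * ‖g x‖
        = ‖(h (y + z) - h y * h z) * g x‖ := (norm_mul _ _).symm
      _ ≤ ‖-(g (x + c * z + c * y) - h (y + z) * g x)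
            + (g (x + c * z + c * y) - h y * g (x + c * z))‖
          + ‖h y * (g (x + c * z) - h z * g x)‖ := by
          rw [key]; exact norm_add_le _ _
      _ ≤ ‖-(g (x + c * z + c * y) - h (y + z) * g x)‖
          + ‖g (x + c * z + c * y) - h y * g (x + c * z)‖
          + ‖h y * (g (x + c * z) - h z * g x)‖ := by
          linarith [norm_add_le (-(g (x + c * z + c * y) - h (y + z) * g x))
            (g (x + c * z + c * y) - h y * g (x + c * z))]
      _ ≤ ε + ε + ‖h y‖ * ε := by
          rw [norm_neg, norm_mul]
          have := mul_le_mul_of_nonneg_left e3 (norm_nonneg (h y))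
          linarith [e1, e2]
      _ = (2 + ‖h y‖) * ε := by ring
  have h0 := mul_le_of_unbdd (norm_nonneg _) hg hbnd
  rw [norm_eq_zero] at h0
  exact sub_eq_zero.mp h0

lemma exact_of_superstable {g h : ℂ → ℂ} {c : ℂ} {ε : ℝ}
    (H : ∀ x y, ‖g (x + c * y) - h y * g x‖ ≤ ε)
    (hexp : ∀ y z, h (y + z) = h y * h z)
    (hh : ∀ C, ∃ y, C < ‖h y‖) :
    ∀ x z, g (x + c * z) = h z * g x := by
  intro x z
  have hbnd : ∀ y : ℂ, ‖g (x + c * z) - h z * g x‖ * ‖h y‖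
      ≤ 2 * ε := by
    intro y
    have e1 := H x (y + z)
    have harg : x + c * (y + z) = x + c * z + c * y := by ring
    rw [harg, hexp y z] at e1
    have e2 := H (x + c * z) y
    have key : h y * (g (x + c * z) - h z * g x) =
        -(g (x + c * z + c * y) - h y * g (x + c * z))
        + (g (x + c * z + c * y) - h y * h z * g x) := by ring
    have e1' : ‖g (x + c * z + c * y) - h y * h z * g x‖ ≤ ε := e1
    calc ‖g (x + c * z) - h z * g x‖ * ‖h y‖
        = ‖h y * (g (x + c * z) - h z * g x)‖ := by
          rw [norm_mul]; ring
      _ ≤ ‖-(g (x + c * z + c * y) - h y * g (x + c * z))‖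
          + ‖g (x + c * z + c * y) - h y * h z * g x‖ := by
          rw [key]; exact norm_add_le _ _
      _ ≤ 2 * ε := by
          rw [norm_neg]; linarith [e2, e1']
  have h0 := mul_le_of_unbdd (norm_nonneg _) hh hbnd
  rw [norm_eq_zero] at h0
  exact sub_eq_zero.mp h0



/-- Let `n ≥ 2` and `m ∈ {0,…,n−1}` with `gcd(n,m) = 1`.
Suppose `F(x) = circ(f₀(x),…,f_{n−1}(x))` is a circulant matrix function such
that `sup_x ‖F(x)‖ = ∞` (with the 1-norm `‖A‖ = max_i Σ_j |a_{ij}|`) and there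
is an `ε > 0` with `‖F(x + ω^m y) − Ω^(−m) F(y) Ω^m F(x)‖ < ε` for all `x, y`.
Then `F(x + ω^m y) = Ω^(−m) F(y) Ω^m F(x)` for all `x, y ∈ ℂ`. -/
theorem stability_of_circulant_equation_coprime
    (n : ℕ) (hn : 2 ≤ n)
    (ω : ℂ) (hω : ω = Complex.exp (2 * Real.pi * Complex.I / n))
    (m : ℕ) (hm : m < n) (hcop : Nat.gcd n m = 1)
    (Om : Matrix (Fin n) (Fin n) ℂ)
    (hOm : Om = Matrix.diagonal fun j : Fin n => ω ^ (j : ℕ))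
    (Nrm : Matrix (Fin n) (Fin n) ℂ → ℝ)
    (hNrm : ∀ A : Matrix (Fin n) (Fin n) ℂ,
      Nrm A = Finset.univ.sup' (Finset.univ_nonempty_iff.mpr ⟨⟨0, by omega⟩⟩)
        (fun i : Fin n => ∑ j : Fin n, ‖A i j‖))
    (f : Fin n → ℂ → ℂ)
    (F : ℂ → Matrix (Fin n) (Fin n) ℂ)
    (hF : ∀ (x : ℂ) (j k : Fin n), F x j k = f (k - j) x)
    (hunbdd : ∀ C : ℝ, ∃ x : ℂ, C < Nrm (F x))
    (ε : ℝ) (hε : 0 < ε)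
    (happrox : ∀ x y : ℂ,
      Nrm (F (x + ω ^ m * y) - Om⁻¹ ^ m * F y * Om ^ m * F x) < ε) :
    ∀ x y : ℂ, F (x + ω ^ m * y) = Om⁻¹ ^ m * F y * Om ^ m * F x := by
  haveI : NeZero n := ⟨by omega⟩
  have hprim : IsPrimitiveRoot ω n := by
    rw [hω]; exact Complex.isPrimitiveRoot_exp n (by omega)
  have hω1 : ω ^ n = 1 := hprim.pow_eq_one
  have hωne : ω ≠ 0 := by
    intro h
    rw [h, zero_pow (by omega : n ≠ 0)] at hω1
    exact zero_ne_one hω1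
  have habs : ‖ω‖ = 1 := by
    have h1 : ‖ω‖ ^ n = 1 := by
      rw [← norm_pow, hω1, norm_one]
    rcases (pow_eq_one_iff_cases ..).mp h1 with h | h | h
    · omega
    · exact h
    · nlinarith [norm_nonneg ω, h.1]
  have hpow : ∀ a : ℕ, ω ^ a = ω ^ (a % n) := by
    intro a
    conv_lhs => rw [← Nat.div_add_mod a n]
    rw [pow_add, pow_mul, hω1, one_pow, one_mul]
  have hcong : ∀ a b : ℕ, a % n = b % n → ω ^ a = ω ^ b := by
    intro a b h
    rw [hpow a, hpow b, h]
  set m' : Fin n := (m : Fin n) with hm'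
  have hm'val : (m' : ℕ) = m := by
    rw [hm', Fin.val_natCast]
    exact Nat.mod_eq_of_lt hm
  set g : Fin n → ℂ → ℂ := fun j x => ∑ t : Fin n, f t x * ω ^ ((j : ℕ) * (t : ℕ)) with hgdef
  set v : Fin n → Fin n → ℂ := fun j k => ω ^ ((j : ℕ) * (k : ℕ)) with hvdef
  -- DFT orthogonality
  have hDFT : ∀ s t : Fin n,
      (∑ j : Fin n, ω ^ ((j : ℕ) * (s : ℕ)) * (ω ^ ((j : ℕ) * (t : ℕ)))⁻¹)
        = if s = t then (n : ℂ) else 0 := by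
    intro s t
    have hterm : ∀ j : Fin n, ω ^ ((j : ℕ) * (s : ℕ)) * (ω ^ ((j : ℕ) * (t : ℕ)))⁻¹
        = (ω ^ (s : ℕ) * (ω ^ (t : ℕ))⁻¹) ^ (j : ℕ) := by
      intro j
      rw [mul_pow, inv_pow, ← pow_mul, ← pow_mul, Nat.mul_comm (s : ℕ) (j : ℕ),
        Nat.mul_comm (t : ℕ) (j : ℕ)]
    simp only [hterm]
    rw [Fin.sum_univ_eq_sum_range (fun i => (ω ^ (s : ℕ) * (ω ^ (t : ℕ))⁻¹) ^ i)]
    by_cases hst : s = t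
    · subst hst
      rw [mul_inv_cancel₀ (pow_ne_zero _ hωne)]
      simp
    · have hz1 : ω ^ (s : ℕ) * (ω ^ (t : ℕ))⁻¹ ≠ 1 := by
        intro hcon
        apply hst
        have : ω ^ (s : ℕ) = ω ^ (t : ℕ) := by
          field_simp at hcon; exact hcon
        exact Fin.ext (hprim.pow_inj s.isLt t.isLt this)
      rw [geom_sum_eq hz1]
      have hzn : (ω ^ (s : ℕ) * (ω ^ (t : ℕ))⁻¹) ^ n = 1 := by
        rw [mul_pow, inv_pow, ← pow_mul, ← pow_mul, Nat.mul_comm, Nat.mul_comm (t : ℕ) n,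
          pow_mul, pow_mul, hω1, one_pow, one_pow, inv_one, mul_one]
      rw [hzn, sub_self, zero_div]
      exact (if_neg hst).symm
  -- eigen relation for F x
  have hFv : ∀ (x : ℂ) (j : Fin n), (F x) *ᵥ (v j) = fun a => g j x * v j a := by
    intro x j
    funext a
    show ∑ k : Fin n, F x a k * v j k = g j x * v j a
    simp only [hF, hvdef, hgdef]
    have step1 : (∑ k : Fin n, f (k - a) x * ω ^ ((j : ℕ) * (k : ℕ)))
        = ∑ t : Fin n, f t x * ω ^ ((j : ℕ) * (((a + t : Fin n)) : ℕ)) := by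
      apply Fintype.sum_equiv (Equiv.addLeft a).symm
      intro t; simp [Equiv.addLeft, sub_eq_neg_add]
    rw [step1, Finset.sum_mul]
    apply Finset.sum_congr rfl
    intro t _
    rw [mul_assoc]
    congr 1
    rw [← pow_add]
    apply hcong
    rw [Fin.val_add]
    have h2 : (j : ℕ) * (t : ℕ) + (j : ℕ) * (a : ℕ) = (j : ℕ) * ((a : ℕ) + (t : ℕ)) := by ring
    rw [h2]
    exact Nat.ModEq.mul_left _ (Nat.mod_modEq _ n)
  -- powers of Om
  have hOmpow : Om ^ m = Matrix.diagonal (fun k : Fin n => ω ^ (m * (k : ℕ))) := by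
    rw [hOm, Matrix.diagonal_pow]
    apply congrArg Matrix.diagonal
    funext k
    rw [Pi.pow_apply, ← pow_mul, Nat.mul_comm]
  have hOminv : Om⁻¹ = Matrix.diagonal (fun j : Fin n => (ω ^ (j : ℕ))⁻¹) := by
    apply Matrix.inv_eq_left_inv
    rw [hOm, Matrix.diagonal_mul_diagonal]
    convert Matrix.diagonal_one using 2
    funext j
    exact inv_mul_cancel₀ (pow_ne_zero _ hωne)
  have hOminvpow : Om⁻¹ ^ m = Matrix.diagonal (fun k : Fin n => (ω ^ (m * (k : ℕ)))⁻¹) := by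
    rw [hOminv, Matrix.diagonal_pow]
    apply congrArg Matrix.diagonal
    funext k
    rw [Pi.pow_apply, inv_pow, ← pow_mul, Nat.mul_comm]
  have hOv : ∀ j : Fin n, (Om ^ m) *ᵥ (v j) = v (j + m') := by
    intro j
    funext k
    rw [hOmpow, Matrix.mulVec_diagonal]
    show ω ^ (m * (k : ℕ)) * ω ^ ((j : ℕ) * (k : ℕ)) = ω ^ (((j + m' : Fin n) : ℕ) * (k : ℕ))
    rw [← pow_add]
    apply hcong
    rw [Fin.val_add, hm'val]
    have h2 : m * (k : ℕ) + (j : ℕ) * (k : ℕ) = ((j : ℕ) + m) * (k : ℕ) := by ring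
    rw [h2]
    exact (Nat.ModEq.mul_right _ (Nat.mod_modEq _ n)).symm
  have hOiv : ∀ j : Fin n, (Om⁻¹ ^ m) *ᵥ (v (j + m')) = v j := by
    intro j
    funext k
    rw [hOminvpow, Matrix.mulVec_diagonal]
    show (ω ^ (m * (k : ℕ)))⁻¹ * ω ^ (((j + m' : Fin n) : ℕ) * (k : ℕ)) = ω ^ ((j : ℕ) * (k : ℕ))
    have h1 : ω ^ (((j + m' : Fin n) : ℕ) * (k : ℕ)) = ω ^ (m * (k : ℕ)) * ω ^ ((j : ℕ) * (k : ℕ)) := by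
      rw [← pow_add]
      apply hcong
      rw [Fin.val_add, hm'val]
      have h2 : m * (k : ℕ) + (j : ℕ) * (k : ℕ) = ((j : ℕ) + m) * (k : ℕ) := by ring
      rw [h2]
      exact Nat.ModEq.mul_right _ (Nat.mod_modEq _ n)
    rw [h1, ← mul_assoc, inv_mul_cancel₀ (pow_ne_zero _ hωne), one_mul]
  have hMv : ∀ (x y : ℂ) (j : Fin n),
      (Om⁻¹ ^ m * F y * Om ^ m * F x) *ᵥ (v j) = fun a => (g (j + m') y * g j x) * v j a := by
    intro x y j
    rw [← Matrix.mulVec_mulVec, ← Matrix.mulVec_mulVec, ← Matrix.mulVec_mulVec, hFv x j]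
    have e1 : (fun a => g j x * v j a) = g j x • (v j) := rfl
    rw [e1, Matrix.mulVec_smul, hOv j, Matrix.mulVec_smul, hFv y (j + m')]
    have e2 : (fun a => g (j + m') y * v (j + m') a) = g (j + m') y • (v (j + m')) := rfl
    rw [e2, Matrix.mulVec_smul, Matrix.mulVec_smul, hOiv j]
    funext a
    simp only [Pi.smul_apply, smul_eq_mul]
    ring
  -- the scalar stability inequality
  have hscalar : ∀ (j : Fin n) (x y : ℂ),
      ‖g j (x + ω ^ m * y) - g (j + m') y * g j x‖ ≤ ε := by
    intro j x y
    set D := F (x + ω ^ m * y) - Om⁻¹ ^ m * F y * Om ^ m * F x with hD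
    have h1 : (D *ᵥ (v j)) 0 = g j (x + ω ^ m * y) - g (j + m') y * g j x := by
      rw [hD, Matrix.sub_mulVec]
      have := congrFun (hFv (x + ω ^ m * y) j) 0
      have h2 := congrFun (hMv x y j) 0
      have hv0 : v j 0 = 1 := by
        show ω ^ ((j : ℕ) * ((0 : Fin n) : ℕ)) = 1
        rw [Fin.val_zero, Nat.mul_zero, pow_zero]
      simp only [Pi.sub_apply, this, h2, hv0, mul_one]
    have h2 : ‖(D *ᵥ (v j)) 0‖ ≤ Nrm D := by
      have habsv : ∀ k : Fin n, ‖v j k‖ = 1 := by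
        intro k
        show ‖ω ^ ((j : ℕ) * (k : ℕ))‖ = 1
        rw [norm_pow, habs, one_pow]
      calc ‖(D *ᵥ v j) 0‖
          = ‖∑ k : Fin n, D 0 k * v j k‖ := rfl
        _ ≤ ∑ k : Fin n, ‖D 0 k * v j k‖ := norm_sum_le _ _
        _ = ∑ k : Fin n, ‖D 0 k‖ := by
            apply Finset.sum_congr rfl
            intro k _
            rw [norm_mul, habsv k, mul_one]
        _ ≤ Nrm D := by
            rw [hNrm]
            exact Finset.le_sup' (fun i : Fin n => ∑ k : Fin n, ‖D i k‖)
              (Finset.mem_univ 0)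
    rw [h1] at h2
    exact le_trans h2 (le_of_lt (happrox x y))
  -- Nrm (F x) in terms of f, and bounded by sum of |g j x|
  have hNrmF : ∀ x : ℂ, Nrm (F x) = ∑ t : Fin n, ‖f t x‖ := by
    intro x
    rw [hNrm]
    have hrow : ∀ i : Fin n, (∑ k : Fin n, ‖F x i k‖)
        = ∑ t : Fin n, ‖f t x‖ := by
      intro i
      simp only [hF]
      apply Fintype.sum_equiv (Equiv.addLeft i).symm
      intro t; simp [Equiv.addLeft, sub_eq_neg_add]
    have : (fun i : Fin n => ∑ k : Fin n, ‖F x i k‖)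
        = fun _ : Fin n => ∑ t : Fin n, ‖f t x‖ := funext hrow
    rw [this, Finset.sup'_const]
  have hinv : ∀ (c : Fin n → ℂ) (b : Fin n),
      (∑ j : Fin n, (∑ k : Fin n, c k * ω ^ ((j : ℕ) * (k : ℕ))) * (ω ^ ((j : ℕ) * (b : ℕ)))⁻¹)
        = n * c b := by
    intro c b
    have h1 : ∀ j : Fin n,
        (∑ k : Fin n, c k * ω ^ ((j : ℕ) * (k : ℕ))) * (ω ^ ((j : ℕ) * (b : ℕ)))⁻¹
          = ∑ k : Fin n, c k * (ω ^ ((j : ℕ) * (k : ℕ)) * (ω ^ ((j : ℕ) * (b : ℕ)))⁻¹) := by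
      intro j
      rw [Finset.sum_mul]
      exact Finset.sum_congr rfl (fun k _ => by ring)
    simp only [h1]
    rw [Finset.sum_comm]
    have h2 : ∀ k : Fin n,
        (∑ j : Fin n, c k * (ω ^ ((j : ℕ) * (k : ℕ)) * (ω ^ ((j : ℕ) * (b : ℕ)))⁻¹))
          = c k * (if k = b then (n : ℂ) else 0) := by
      intro k
      rw [← Finset.mul_sum, hDFT k b]
    simp only [h2, mul_ite, mul_zero]
    rw [Finset.sum_ite_eq' Finset.univ b (fun k => c k * (n : ℂ))]
    simp [mul_comm]
  have hn0R : (0 : ℝ) < n := by positivity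
  have hGsum : ∀ x : ℂ, Nrm (F x) ≤ ∑ j : Fin n, ‖g j x‖ := by
    intro x
    rw [hNrmF]
    have hfg : ∀ t : Fin n,
        ‖f t x‖ ≤ (∑ j : Fin n, ‖g j x‖) / n := by
      intro t
      rw [le_div_iff₀ hn0R]
      have h1 : (n : ℂ) * f t x = ∑ j : Fin n, g j x * (ω ^ ((j : ℕ) * (t : ℕ)))⁻¹ :=
        (hinv (fun k => f k x) t).symm
      have h2 : ‖(n : ℂ) * f t x‖ ≤ ∑ j : Fin n, ‖g j x‖ := by
        rw [h1]
        refine le_trans (norm_sum_le _ _) ?_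
        apply Finset.sum_le_sum
        intro j _
        rw [norm_mul, norm_inv, norm_pow, habs, one_pow, inv_one, mul_one]
      rw [norm_mul, Complex.norm_natCast] at h2
      linarith [h2]
    calc ∑ t : Fin n, ‖f t x‖
        ≤ ∑ _t : Fin n, (∑ j : Fin n, ‖g j x‖) / n :=
          Finset.sum_le_sum (fun t _ => hfg t)
      _ = n * ((∑ j : Fin n, ‖g j x‖) / n) := by
          rw [Finset.sum_const, Finset.card_univ, Fintype.card_fin, nsmul_eq_mul]
      _ = ∑ j : Fin n, ‖g j x‖ := by field_simp
  have hGunb : ∀ C : ℝ, ∃ x : ℂ, C < ∑ j : Fin n, ‖g j x‖ := by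
    intro C
    obtain ⟨x, hx⟩ := hunbdd C
    exact ⟨x, lt_of_lt_of_le hx (hGsum x)⟩
  have hsome : ∃ j₀ : Fin n, ∀ C : ℝ, ∃ x : ℂ, C < ‖g j₀ x‖ := by
    by_contra hcon
    push_neg at hcon
    choose B hB using hcon
    obtain ⟨x, hx⟩ := hGunb (∑ j : Fin n, B j)
    have : ∑ j : Fin n, ‖g j x‖ ≤ ∑ j : Fin n, B j :=
      Finset.sum_le_sum (fun j _ => hB j x)
    linarith
  have hstep : ∀ j : Fin n, (∀ C : ℝ, ∃ x : ℂ, C < ‖g j x‖) →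
      ∀ C : ℝ, ∃ y : ℂ, C < ‖g (j + m') y‖ :=
    fun j hj => unbdd_step (pow_ne_zero m hωne) (hscalar j) hj
  -- coverage of all indices
  have hbezout : ∃ e : Fin n, m' * e = 1 := by
    have hb := Nat.gcd_eq_gcd_ab n m
    rw [hcop] at hb
    refine ⟨((Nat.gcdB n m : ℤ) : Fin n), ?_⟩
    have hcast := congrArg (fun z : ℤ => (z : Fin n)) hb
    push_cast at hcast
    rw [Fin.natCast_self, zero_mul, zero_add] at hcast
    rw [hm']
    exact hcast.symm
  have hcover : ∀ d : Fin n, ∃ k : ℕ, (k : Fin n) * m' = d := by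
    obtain ⟨e, he⟩ := hbezout
    intro d
    refine ⟨(d * e).val, ?_⟩
    rw [Fin.cast_val_eq_self]
    calc d * e * m' = d * (m' * e) := by ring
      _ = d := by rw [he, mul_one]
  have hall : ∀ j : Fin n, ∀ C : ℝ, ∃ x : ℂ, C < ‖g j x‖ := by
    obtain ⟨j₀, hj₀⟩ := hsome
    have hiter : ∀ k : ℕ, ∀ C : ℝ, ∃ x : ℂ,
        C < ‖g (j₀ + (k : Fin n) * m') x‖ := by
      intro k
      induction k with
      | zero => simpa using hj₀
      | succ k ih =>
          have hs := hstep _ ih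
          have harg : j₀ + ((k + 1 : ℕ) : Fin n) * m' = j₀ + (k : Fin n) * m' + m' := by
            push_cast
            ring
          rw [harg]
          exact hs
    intro j
    obtain ⟨k, hk⟩ := hcover (j - j₀)
    have harg : j₀ + (k : Fin n) * m' = j := by
      rw [hk]; ring
    have := hiter k
    rwa [harg] at this
  have hexp : ∀ j : Fin n, ∀ y z : ℂ, g (j + m') (y + z) = g (j + m') y * g (j + m') z :=
    fun j => exp_of_superstable (hscalar j) (hall j)
  have hexact : ∀ j : Fin n, ∀ x y : ℂ, g j (x + ω ^ m * y) = g (j + m') y * g j x :=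
    fun j => fun x y => exact_of_superstable (hscalar j) (hexp j) (hall (j + m')) x y
  -- conclude the matrix identity
  intro x y
  have hDv : ∀ j : Fin n,
      (F (x + ω ^ m * y) - Om⁻¹ ^ m * F y * Om ^ m * F x) *ᵥ (v j) = 0 := by
    intro j
    rw [Matrix.sub_mulVec, hFv, hMv]
    funext a
    simp [hexact j x y]
  have hD0 : F (x + ω ^ m * y) - Om⁻¹ ^ m * F y * Om ^ m * F x = 0 := by
    set D := F (x + ω ^ m * y) - Om⁻¹ ^ m * F y * Om ^ m * F x with hD
    ext a b
    have h2 : ∀ j : Fin n, (∑ k : Fin n, D a k * ω ^ ((j : ℕ) * (k : ℕ))) = 0 := by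
      intro j
      have h3 := congrFun (hDv j) a
      simpa [Matrix.mulVec, dotProduct, hvdef] using h3
    have h1 : (n : ℂ) * D a b
        = ∑ j : Fin n, (∑ k : Fin n, D a k * ω ^ ((j : ℕ) * (k : ℕ)))
            * (ω ^ ((j : ℕ) * (b : ℕ)))⁻¹ := (hinv (fun k => D a k) b).symm
    simp only [h2, zero_mul, Finset.sum_const_zero] at h1
    have hnC : (n : ℂ) ≠ 0 := by
      exact_mod_cast (by positivity : (0:ℝ) < n).ne'
    have := mul_eq_zero.mp h1
    rcases this with h | h
    · exact absurd h hnC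
    · simpa using h
  exact sub_eq_zero.mp hD0
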